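/- arXiv:2006.12465 — 2 statements merged into one kernel-verified Lean document; each statement's English description precedes it below -/
import Mathlib

section
/- Fix a finite alphabet A and a real constant c with 0 < c < 1. For a deterministic automaton γ = ⟨o,t⟩ : X → 2 × X^A, define th : X → ([0,1])^{A*} by th(x)(ε) = o(x) and th(x)(a·w) = c · th(t(x)(a))(w). Define the operator F on functions d : X × X → [0,1] by F(d)(x,y) = 1 if o(x) ≠ o(y), and F(d)(x,y) = c · max_{a∈A} d(t(x)(a), t(y)(a)) otherwise. Then the least fixed point of F (with respect to the pointwise order on [0,1] where smaller distances are larger in the fibration, i.e., the greatest fixed point in the reversed order) equals the logical distance d_log(x,y) = sup_{w∈A*} |th(x)(w) − th(y)(w)|. -/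
open scoped BigOperators

variable {X A : Type}

/-- Discounted theory map of a deterministic automaton. -/
def dfaTh (o : X → Bool) (t : X → A → X) (c : ℝ) : X → List A → ℝ
  | x, [] => if o x then 1 else 0
  | x, a :: w => c * dfaTh o t c (t x a) w

/-- The one-step operator on `[0,1]`-valued relations. -/
noncomputable def dfaF [Fintype A] [Nonempty A] (o : X → Bool) (t : X → A → X) (c : ℝ)
    (d : X → X → ℝ) : X → X → ℝ :=
  fun x y => if o x ≠ o y then 1 else c * ⨆ a : A, d (t x a) (t y a)

lemma dfaTh_nonneg (o : X → Bool) (t : X → A → X) {c : ℝ} (hc : 0 ≤ c) :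
    ∀ (w : List A) (x : X), 0 ≤ dfaTh o t c x w := by
  intro w
  induction w with
  | nil => intro x; simp only [dfaTh]; split <;> norm_num
  | cons a w ih => intro x; exact mul_nonneg hc (ih _)

lemma dfaTh_le_one (o : X → Bool) (t : X → A → X) {c : ℝ} (hc : 0 ≤ c) (hc1 : c ≤ 1) :
    ∀ (w : List A) (x : X), dfaTh o t c x w ≤ 1 := by
  intro w
  induction w with
  | nil => intro x; simp only [dfaTh]; split <;> norm_num
  | cons a w ih =>
    intro x
    calc c * dfaTh o t c (t x a) w ≤ c * 1 := by
          exact mul_le_mul_of_nonneg_left (ih _) hc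
      _ ≤ 1 := by linarith

lemma dfaG_le_one (o : X → Bool) (t : X → A → X) {c : ℝ} (hc : 0 ≤ c) (hc1 : c ≤ 1)
    (x y : X) (w : List A) : |dfaTh o t c x w - dfaTh o t c y w| ≤ 1 := by
  have h1 := dfaTh_nonneg o t hc w x
  have h2 := dfaTh_nonneg o t hc w y
  have h3 := dfaTh_le_one o t hc hc1 w x
  have h4 := dfaTh_le_one o t hc hc1 w y
  rw [abs_sub_le_iff]; constructor <;> linarith

lemma dfaG_bdd (o : X → Bool) (t : X → A → X) {c : ℝ} (hc : 0 ≤ c) (hc1 : c ≤ 1)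
    (x y : X) : BddAbove (Set.range fun w : List A => |dfaTh o t c x w - dfaTh o t c y w|) := by
  refine ⟨1, ?_⟩
  rintro _ ⟨w, rfl⟩
  exact dfaG_le_one o t hc hc1 x y w

/-- The least fixed point (w.r.t. the pointwise order on `[0,1]`, i.e. the greatest
fixed point in the reversed fibration order) of the shortest-distinguishing-word
operator `F` is the logical distance `d_log (x,y) = ⨆ w, |th x w - th y w|`. -/
theorem sdw_fixed_point [Fintype A] [Nonempty A] (o : X → Bool) (t : X → A → X)
    (c : ℝ) (hc0 : 0 < c) (hc1 : c < 1) :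
    (dfaF o t c (fun x y => ⨆ w : List A, |dfaTh o t c x w - dfaTh o t c y w|) =
      fun x y => ⨆ w : List A, |dfaTh o t c x w - dfaTh o t c y w|) ∧
    ∀ d : X → X → ℝ, (∀ x y, 0 ≤ d x y ∧ d x y ≤ 1) → dfaF o t c d = d →
      ∀ x y, (⨆ w : List A, |dfaTh o t c x w - dfaTh o t c y w|) ≤ d x y := by
  have hc0' : (0:ℝ) ≤ c := le_of_lt hc0
  have hc1' : c ≤ 1 := le_of_lt hc1
  set G : X → X → List A → ℝ := fun x y w => |dfaTh o t c x w - dfaTh o t c y w| with hG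
  have hGnn : ∀ x y w, 0 ≤ G x y w := fun x y w => abs_nonneg _
  have hG1 : ∀ x y w, G x y w ≤ 1 := fun x y w => dfaG_le_one o t hc0' hc1' x y w
  have hbdd : ∀ x y, BddAbove (Set.range (G x y)) := fun x y => dfaG_bdd o t hc0' hc1' x y
  have hGcons : ∀ x y a w, G x y (a :: w) = c * G (t x a) (t y a) w := by
    intro x y a w
    simp only [hG, dfaTh]
    rw [← mul_sub, abs_mul, abs_of_nonneg hc0']
  have hsup_nn : ∀ x y, 0 ≤ ⨆ w, G x y w := by
    intro x y
    exact le_trans (hGnn x y []) (le_ciSup (hbdd x y) [])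
  constructor
  · funext x y
    simp only [dfaF]
    split
    · rename_i h
      -- o x ≠ o y, sup = 1
      refine le_antisymm ?_ (ciSup_le fun w => hG1 x y w)
      have : G x y [] = 1 := by
        simp only [hG, dfaTh]
        cases hx : o x <;> cases hy : o y <;> simp [hx, hy] at h ⊢
      calc (1:ℝ) = G x y [] := this.symm
        _ ≤ ⨆ w, G x y w := le_ciSup (hbdd x y) []
    · rename_i h
      push_neg at h
      -- o x = o y
      have hbddA : BddAbove (Set.range fun a : A => ⨆ w, G (t x a) (t y a) w) :=
        Set.Finite.bddAbove (Set.finite_range _)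
      refine le_antisymm ?_ ?_
      · rw [Real.mul_iSup_of_nonneg hc0']
        refine ciSup_le fun a => ?_
        rw [Real.mul_iSup_of_nonneg hc0']
        refine ciSup_le fun w => ?_
        calc c * G (t x a) (t y a) w = G x y (a :: w) := (hGcons x y a w).symm
          _ ≤ ⨆ w, G x y w := le_ciSup (hbdd x y) _
      · refine ciSup_le fun w => ?_
        rcases w with _ | ⟨a, w⟩
        · show G x y [] ≤ _
          have : G x y [] = 0 := by simp [hG, dfaTh, h]
          rw [this]
          refine mul_nonneg hc0' ?_
          obtain ⟨a⟩ := (inferInstance : Nonempty A)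
          exact le_trans (hsup_nn (t x a) (t y a)) (le_ciSup hbddA a)
        · show G x y (a :: w) ≤ _
          rw [hGcons]
          refine mul_le_mul_of_nonneg_left ?_ hc0'
          calc G (t x a) (t y a) w ≤ ⨆ w, G (t x a) (t y a) w :=
                le_ciSup (hbdd _ _) w
            _ ≤ ⨆ a, ⨆ w, G (t x a) (t y a) w := le_ciSup hbddA a
  · intro d hd hfix x y
    have key : ∀ (w : List A) (x y : X), G x y w ≤ d x y := by
      intro w
      induction w with
      | nil =>
        intro x y
        by_cases h : o x = o y
        · have : G x y [] = 0 := by simp [hG, dfaTh, h]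
          rw [this]; exact (hd x y).1
        · have hdxy : d x y = 1 := by
            have := congrFun (congrFun hfix x) y
            simpa [dfaF, h] using this.symm
          rw [hdxy]; exact hG1 x y []
      | cons a w ih =>
        intro x y
        rw [hGcons]
        have h1 : c * G (t x a) (t y a) w ≤ c * d (t x a) (t y a) :=
          mul_le_mul_of_nonneg_left (ih _ _) hc0'
        refine le_trans h1 ?_
        by_cases h : o x = o y
        · have hdxy : d x y = c * ⨆ a, d (t x a) (t y a) := by
            have := congrFun (congrFun hfix x) y
            simpa [dfaF, h] using this.symm
          rw [hdxy]
          refine mul_le_mul_of_nonneg_left ?_ hc0'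
          exact le_ciSup (f := fun a : A => d (t x a) (t y a)) (Set.Finite.bddAbove (Set.finite_range _)) a
        · have hdxy : d x y = 1 := by
            have := congrFun (congrFun hfix x) y
            simpa [dfaF, h] using this.symm
          rw [hdxy]
          calc c * d (t x a) (t y a) ≤ c * 1 :=
                mul_le_mul_of_nonneg_left (hd _ _).2 hc0'
            _ ≤ 1 := by linarith
    exact ciSup_le fun w => key w x y
end

section
/- Let γ : X → (P_fin X)^A be an image-finite labelled transition system. Define similarity ≾ as the greatest relation R ⊆ X × X such that x R y implies: for all a ∈ A and x' ∈ γ(x)(a) there exists y' ∈ γ(y)(a) with x' R y'. Define the modal logic with syntax φ ::= ⊤ | φ ∧ ψ | ⟨a⟩φ and standard semantics. Then for all states x, y: x ≾ y if and only if every formula φ satisfied by x is also satisfied by y. -/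
/-- Formulas of the logic `φ ::= ⊤ | φ ∧ ψ | ⟨a⟩φ`. -/
inductive SimFormula (A : Type) : Type
  | top : SimFormula A
  | and : SimFormula A → SimFormula A → SimFormula A
  | dia : A → SimFormula A → SimFormula A

variable {X A : Type}

/-- Standard semantics of the logic on an LTS. -/
def simSat (γ : X → A → Finset X) : X → SimFormula A → Prop
  | _, SimFormula.top => True
  | x, SimFormula.and φ ψ => simSat γ x φ ∧ simSat γ x ψ
  | x, SimFormula.dia a φ => ∃ x' ∈ γ x a, simSat γ x' φ

/-- `R` is a simulation. -/
def IsSimulation (γ : X → A → Finset X) (R : X → X → Prop) : Prop :=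
  ∀ x y, R x y → ∀ a : A, ∀ x' ∈ γ x a, ∃ y' ∈ γ y a, R x' y'

/-! Simulations preserve formulas by induction on the formula. Conversely, logical inclusion is
itself a simulation: if a successor `x'` of `x` were matched by no successor of `y`, then the
finitely many formulas separating `x'` from the successors of `y` conjoin into one formula `φ`
with `⟨a⟩φ` true at `x` and false at `y`. -/

theorem IsSimulation.simSat_imp {γ : X → A → Finset X} {R : X → X → Prop}
    (hR : IsSimulation γ R) (φ : SimFormula A) :
    ∀ {x y}, R x y → simSat γ x φ → simSat γ y φ := by
  induction φ with
  | top => exact fun _ _ => trivial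
  | and φ ψ ihφ ihψ => exact fun hxy h => ⟨ihφ hxy h.1, ihψ hxy h.2⟩
  | dia a φ ih =>
    rintro x y hxy ⟨x', hx', hsat⟩
    obtain ⟨y', hy', hR'⟩ := hR x y hxy a x' hx'
    exact ⟨y', hy', ih hR' hsat⟩

theorem exists_simSat_forall_not_simSat (γ : X → A → Finset X) {x : X} (s : Finset X)
    (h : ∀ y ∈ s, ∃ φ : SimFormula A, simSat γ x φ ∧ ¬ simSat γ y φ) :
    ∃ φ : SimFormula A, simSat γ x φ ∧ ∀ y ∈ s, ¬ simSat γ y φ := by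
  classical
  induction s using Finset.induction_on with
  | empty => exact ⟨.top, trivial, by simp⟩
  | insert y s _ ih =>
    obtain ⟨φ, hxφ, hyφ⟩ := h y (Finset.mem_insert_self y s)
    obtain ⟨ψ, hxψ, hsψ⟩ := ih fun z hz => h z (Finset.mem_insert_of_mem hz)
    refine ⟨.and φ ψ, ⟨hxφ, hxψ⟩, ?_⟩
    rintro z hz ⟨hzφ, hzψ⟩
    rcases Finset.mem_insert.mp hz with rfl | hz
    exacts [hyφ hzφ, hsψ z hz hzψ]

theorem isSimulation_logicalInclusion (γ : X → A → Finset X) :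
    IsSimulation γ fun x y => ∀ φ : SimFormula A, simSat γ x φ → simSat γ y φ := by
  intro x y hxy a x' hx'
  by_contra! hunmatched
  obtain ⟨φ, hx'φ, hφ⟩ := exists_simSat_forall_not_simSat γ (γ y a) hunmatched
  obtain ⟨y', hy', hy'φ⟩ := hxy (.dia a φ) ⟨x', hx', hx'φ⟩
  exact hφ y' hy' hy'φ

/-- Hennessy–Milner theorem for similarity on image-finite LTSs: `x` is simulated by
`y` (i.e. related by the greatest simulation) iff every formula of the
`⊤`/`∧`/`⟨a⟩`-logic satisfied by `x` is satisfied by `y`. -/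
theorem similarity_iff_logical_inclusion (γ : X → A → Finset X) (x y : X) :
    (∃ R : X → X → Prop, IsSimulation γ R ∧ R x y) ↔
      ∀ φ : SimFormula A, simSat γ x φ → simSat γ y φ :=
  ⟨fun ⟨_, hR, hxy⟩ φ => hR.simSat_imp φ hxy,
    fun h => ⟨_, isSimulation_logicalInclusion γ, h⟩⟩
end
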